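/- Let N ≥ 2, and let J ≤ M be positive integers. Consider the parameter space of a core tensor G ∈ ℝ^{J × ⋯ × J} (order N) together with factor matrices U^(i) ∈ ℝ^{M × J}, equipped with Lebesgue measure. If N is even, then for Lebesgue-almost every choice of parameters the resulting Tucker tensor A_{d_1,…,d_N} = Σ_{j_1,…,j_N} G_{j_1,…,j_N} U^(1)_{d_1,j_1} ⋯ U^(N)_{d_N,j_N} has CP rank at least J^{N/2}; if N is odd, for Lebesgue-almost every choice of parameters the CP rank is at least J^{(N−1)/2}. -/

import Mathlib

open MeasureTheory

/-- `A` admits a CP representation with `Z` terms. -/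
def IsCPRepr {N M : ℕ} (A : (Fin N → Fin M) → ℝ) (Z : ℕ) : Prop :=
  ∃ (lam : Fin Z → ℝ) (a : Fin Z → Fin N → Fin M → ℝ),
    ∀ d : Fin N → Fin M, A d = ∑ z, lam z * ∏ i, a z i (d i)

/-- The CP rank of a tensor: the minimal number of rank-one terms. -/
noncomputable def cpRank {N M : ℕ} (A : (Fin N → Fin M) → ℝ) : ℕ :=
  sInf {Z | IsCPRepr A Z}

/-- The order-`N` tensor of dimension `M` in each mode obtained from the Tucker format with
core `G ∈ ℝ^{J × ⋯ × J}` and factor matrices `U i ∈ ℝ^{M × J}`. -/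
def tuckerTensor {N M J : ℕ}
    (G : (Fin N → Fin J) → ℝ) (U : Fin N → Fin M → Fin J → ℝ) :
    (Fin N → Fin M) → ℝ :=
  fun d => ∑ j : Fin N → Fin J, G j * ∏ i, U i (d i) (j i)

/-!
Split the modes into `⌈N/2⌉` row modes and `⌊N/2⌋` column modes and flatten the tensor into a
matrix. A CP representation with `Z` terms factors the flattening through `ℝ^Z`, so every
nonsingular minor of the flattening bounds the CP rank from below.

The entries of the flattening of a Tucker tensor are polynomials in the core and factor entries,
hence so is the determinant of a fixed `J^⌊N/2⌋ × J^⌊N/2⌋` minor. This polynomial is not zero: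
if the factors are the inclusions `ℝ^J ↪ ℝ^M`, the Tucker tensor is the core itself, and the core
can be chosen to flatten to the identity on the minor. The zero set of a nonzero real polynomial
is Lebesgue-null (Fubini and induction on the number of variables), so the minor is nonsingular
for almost every choice of parameters.
-/

theorem MeasurableEquiv.piOptionEquivProd_symm_eq_elim {σ α : Type*} [MeasurableSpace α]
    (z : (σ → α) × α) :
    (MeasurableEquiv.piOptionEquivProd fun _ : Option σ => α).symm z =
      fun o => o.elim z.2 z.1 := by
  funext o; cases o <;> rfl

theorem volume_measurePreserving_piOptionEquivProd_symm (σ : Type*) [Fintype σ] :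
    MeasurePreserving (MeasurableEquiv.piOptionEquivProd fun _ : Option σ => ℝ).symm :=
  ⟨MeasurableEquiv.measurable _, Measure.pi_map_piOptionEquivProd fun _ => volume⟩

theorem volume_measurePreserving_uncurry (ι κ X : Type*) [Fintype ι] [Fintype κ] [MeasureSpace X]
    [SigmaFinite (volume : Measure X)] :
    MeasurePreserving (Function.uncurry : (ι → κ → X) → ι × κ → X) := by
  have hmeas : Measurable (Function.uncurry : (ι → κ → X) → ι × κ → X) :=
    (MeasurableEquiv.curry ι κ X).symm.measurable
  refine ⟨hmeas, (Measure.pi_eq fun s hs => ?_).symm⟩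
  rw [Measure.map_apply hmeas (.univ_pi hs)]
  have hpre : Function.uncurry ⁻¹' Set.univ.pi s =
      Set.univ.pi fun i => Set.univ.pi fun j => s (i, j) := by
    ext; simp [Prod.forall]
  rw [hpre, volume_pi_pi]
  simp [volume_pi_pi, Fintype.prod_prod_type]

namespace MvPolynomial

theorem measurableSet_setOf_eval_eq_zero {σ : Type*} [Fintype σ] (p : MvPolynomial σ ℝ) :
    MeasurableSet {x : σ → ℝ | eval x p = 0} :=
  (isClosed_eq (continuous_eval p) continuous_const).measurableSet

theorem volume_prod_setOf_eval_optionElim_eq_zero {σ : Type*} [Fintype σ]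
    {p : MvPolynomial (Option σ) ℝ}
    (hlead : volume {y : σ → ℝ | eval y (optionEquivLeft ℝ σ p).leadingCoeff = 0} = 0) :
    volume {z : (σ → ℝ) × ℝ | eval (fun o => o.elim z.2 z.1) p = 0} = 0 := by
  have hmeas : MeasurableSet {z : (σ → ℝ) × ℝ | eval (fun o => o.elim z.2 z.1) p = 0} := by
    have := (measurableSet_setOf_eval_eq_zero p).preimage
      (MeasurableEquiv.piOptionEquivProd fun _ => ℝ).symm.measurable
    simpa only [Set.preimage, Set.mem_ofPred_eq, MeasurableEquiv.piOptionEquivProd_symm_eq_elim]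
      using this
  rw [Measure.volume_eq_prod, Measure.measure_prod_null hmeas]
  filter_upwards [measure_eq_zero_iff_ae_notMem.mp hlead] with y hy
  have hq : (optionEquivLeft ℝ σ p).map (eval y) ≠ 0 := fun h => hy <| by
    rw [Polynomial.leadingCoeff, ← Polynomial.coeff_map, h, Polynomial.coeff_zero]
  simp only [Set.preimage, Set.mem_ofPred_eq, optionEquivLeft_elim_eval]
  exact (Polynomial.finite_setOfPred_isRoot hq).measure_zero _

theorem volume_setOf_eval_eq_zero {σ : Type*} [Fintype σ] {p : MvPolynomial σ ℝ} (hp : p ≠ 0) :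
    volume {x : σ → ℝ | eval x p = 0} = 0 := by
  refine Fintype.induction_empty_option
    (P := fun σ _ => ∀ p : MvPolynomial σ ℝ, p ≠ 0 → volume {x : σ → ℝ | eval x p = 0} = 0)
    ?_ ?_ ?_ σ p hp
  · intro α β _ e ih p hp
    let := Fintype.ofEquiv β e.symm
    have hmp := volume_preserving_arrowCongr' e (MeasurableEquiv.refl ℝ) (MeasurePreserving.id _)
    rw [← hmp.measure_preimage (measurableSet_setOf_eval_eq_zero p).nullMeasurableSet]
    have hrename : rename e.symm p ≠ 0 :=
      (rename_injective _ e.symm.injective).ne_iff' (map_zero _) |>.mpr hp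
    have := ih _ hrename
    simp only [eval_rename] at this
    exact this
  · intro p hp
    convert measure_empty (μ := volume)
    refine Set.eq_empty_of_forall_notMem fun x hx => hp ?_
    exact aeval_injective_iff_of_isEmpty.mpr (algebraMap ℝ ℝ).injective (by simpa using hx)
  · intro α _ ih p hp
    rw [← (volume_measurePreserving_piOptionEquivProd_symm α).measure_preimage
      (measurableSet_setOf_eval_eq_zero p).nullMeasurableSet]
    simp only [Set.preimage, Set.mem_ofPred_eq, MeasurableEquiv.piOptionEquivProd_symm_eq_elim]
    refine volume_prod_setOf_eval_optionElim_eq_zero (ih _ ?_)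
    exact Polynomial.leadingCoeff_ne_zero.mpr <|
      (optionEquivLeft ℝ α).injective.ne_iff' (map_zero _) |>.mpr hp

end MvPolynomial

section Flattening

variable {N M : ℕ} {α β : Type*}

def flattening (e : α ⊕ β ≃ Fin N) (A : (Fin N → Fin M) → ℝ) :
    Matrix (α → Fin M) (β → Fin M) ℝ :=
  Matrix.of fun r c => A (Sum.elim r c ∘ e.symm)

theorem isCPRepr_card (A : (Fin N → Fin M) → ℝ) :
    IsCPRepr A (Fintype.card (Fin N → Fin M)) := by
  classical
  let e := (Fintype.equivFin (Fin N → Fin M)).symm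
  refine ⟨fun z => A (e z), fun z i m => if m = e z i then 1 else 0, fun d => ?_⟩
  simp only [Fintype.prod_boole, ← funext_iff, mul_ite, mul_one, mul_zero]
  rw [Fintype.sum_equiv e _ (fun d' => if d = d' then A d' else 0) (fun _ => rfl)]
  simp

theorem isCPRepr_cpRank (A : (Fin N → Fin M) → ℝ) : IsCPRepr A (cpRank A) :=
  Nat.sInf_mem (s := {Z | IsCPRepr A Z}) ⟨_, isCPRepr_card A⟩

theorem IsCPRepr.rank_flattening_le [Fintype α] [Fintype β] [DecidableEq β] (e : α ⊕ β ≃ Fin N)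
    {A : (Fin N → Fin M) → ℝ} {Z : ℕ} (h : IsCPRepr A Z) : (flattening e A).rank ≤ Z := by
  obtain ⟨lam, a, ha⟩ := h
  have hfactor : flattening e A =
      (Matrix.of fun r z => lam z * ∏ i, a z (e (.inl i)) (r i)) *
        Matrix.of fun z c => ∏ i, a z (e (.inr i)) (c i) := by
    ext r c
    simp only [flattening, Matrix.of_apply, Matrix.mul_apply, ha, mul_assoc]
    refine Finset.sum_congr rfl fun z _ => ?_
    rw [← e.prod_comp, Fintype.prod_sum_type]
    simp
  calc (flattening e A).rank ≤ _ := hfactor ▸ Matrix.rank_mul_le_left _ _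
    _ ≤ Fintype.card (Fin Z) := Matrix.rank_le_card_width _
    _ = Z := Fintype.card_fin Z

theorem card_le_cpRank_of_det_submatrix_flattening_ne_zero [Fintype α] [Fintype β] [DecidableEq β]
    {n : Type*} [Fintype n] [DecidableEq n] (e : α ⊕ β ≃ Fin N) {A : (Fin N → Fin M) → ℝ}
    {r : n → α → Fin M} {c : n → β → Fin M} (h : ((flattening e A).submatrix r c).det ≠ 0) :
    Fintype.card n ≤ cpRank A :=
  calc Fintype.card n = ((flattening e A).submatrix r c).rank :=
        (Matrix.rank_of_isUnit _ ((Matrix.isUnit_iff_isUnit_det _).mpr h.isUnit)).symm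
    _ ≤ (flattening e A).rank := Matrix.rank_submatrix_le _ _ _
    _ ≤ cpRank A := (isCPRepr_cpRank A).rank_flattening_le e

end Flattening

section Tucker

variable {N M J : ℕ}

def tuckerCoords (x : ((Fin N → Fin J) → ℝ) × (Fin N → Fin M → Fin J → ℝ)) :
    (Fin N → Fin J) ⊕ (Fin N × Fin M × Fin J) → ℝ :=
  Sum.elim x.1 fun v => x.2 v.1 v.2.1 v.2.2

theorem measurePreserving_tuckerCoords :
    MeasurePreserving (tuckerCoords (N := N) (M := M) (J := J)) := by
  have hcomp : tuckerCoords (N := N) (M := M) (J := J) =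
      (MeasurableEquiv.sumPiEquivProdPi fun _ => ℝ).symm ∘
        Prod.map id fun U => Function.uncurry fun i => Function.uncurry (U i) := by
    funext x s
    cases s <;> rfl
  rw [hcomp]
  exact (volume_measurePreserving_sumPiEquivProdPi_symm _).comp <|
    (MeasurePreserving.id _).prod <| (volume_measurePreserving_uncurry _ _ _).comp <|
      volume_preserving_pi fun _ => volume_measurePreserving_uncurry _ _ _

noncomputable def tuckerPoly (d : Fin N → Fin M) :
    MvPolynomial ((Fin N → Fin J) ⊕ (Fin N × Fin M × Fin J)) ℝ :=
  ∑ j : Fin N → Fin J, .X (.inl j) * ∏ i, .X (.inr (i, d i, j i))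

theorem eval_tuckerPoly (x : ((Fin N → Fin J) → ℝ) × (Fin N → Fin M → Fin J → ℝ))
    (d : Fin N → Fin M) :
    MvPolynomial.eval (tuckerCoords x) (tuckerPoly d) = tuckerTensor x.1 x.2 d := by
  simp [tuckerPoly, tuckerTensor, tuckerCoords]

theorem ae_card_le_cpRank_tuckerTensor {α β n : Type*} [Fintype α] [Fintype β] [DecidableEq β]
    [Fintype n] [DecidableEq n] (e : α ⊕ β ≃ Fin N) (r : n → α → Fin M) (c : n → β → Fin M)
    (x₀ : ((Fin N → Fin J) → ℝ) × (Fin N → Fin M → Fin J → ℝ))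
    (h₀ : ((flattening e (tuckerTensor x₀.1 x₀.2)).submatrix r c).det ≠ 0) :
    ∀ᵐ x : ((Fin N → Fin J) → ℝ) × (Fin N → Fin M → Fin J → ℝ),
      Fintype.card n ≤ cpRank (tuckerTensor x.1 x.2) := by
  let P : Matrix n n (MvPolynomial _ ℝ) :=
    .of fun a b => tuckerPoly (J := J) (Sum.elim (r a) (c b) ∘ e.symm)
  have heval : ∀ x, MvPolynomial.eval (tuckerCoords x) P.det =
      ((flattening e (tuckerTensor x.1 x.2)).submatrix r c).det := by
    intro x
    rw [RingHom.map_det]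
    congr 1
    ext a b
    exact eval_tuckerPoly x _
  have hP : P.det ≠ 0 := fun h => h₀ (by rw [← heval, h, map_zero])
  have hnull := measurePreserving_tuckerCoords.quasiMeasurePreserving.preimage_null
    (MvPolynomial.volume_setOf_eval_eq_zero hP)
  filter_upwards [measure_eq_zero_iff_ae_notMem.mp hnull] with x hx
  exact card_le_cpRank_of_det_submatrix_flattening_ne_zero e (by rwa [← heval])

def inclusionFactor (hJM : J ≤ M) : Fin N → Fin M → Fin J → ℝ :=
  fun _ m j => if m = Fin.castLE hJM j then 1 else 0

theorem tuckerTensor_inclusionFactor (G : (Fin N → Fin J) → ℝ) (hJM : J ≤ M)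
    (g : Fin N → Fin J) : tuckerTensor G (inclusionFactor hJM) (Fin.castLE hJM ∘ g) = G g := by
  simp [tuckerTensor, inclusionFactor, Fintype.prod_boole, ← funext_iff]

def diagonalCore {α β : Type*} [Fintype α] (e : α ⊕ β ≃ Fin N) (pad : (β → Fin J) → α → Fin J) :
    (Fin N → Fin J) → ℝ :=
  fun g => if pad (g ∘ e ∘ .inr) = g ∘ e ∘ .inl then 1 else 0

theorem submatrix_flattening_diagonalCore {α β : Type*} [Fintype α] [Fintype β] [DecidableEq β]
    (e : α ⊕ β ≃ Fin N) {pad : (β → Fin J) → α → Fin J} (hpad : pad.Injective) (hJM : J ≤ M) :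
    (flattening e (tuckerTensor (diagonalCore e pad) (inclusionFactor hJM))).submatrix
      (fun j => Fin.castLE hJM ∘ pad j) (fun j => Fin.castLE hJM ∘ j) = 1 := by
  ext j j'
  simp only [flattening, Matrix.submatrix_apply, Matrix.of_apply, ← Sum.comp_elim]
  rw [Function.comp_assoc, tuckerTensor_inclusionFactor, diagonalCore, Matrix.one_apply]
  have hinl : (Sum.elim (pad j) j' ∘ e.symm) ∘ e ∘ Sum.inl = pad j := by ext; simp
  have hinr : (Sum.elim (pad j) j' ∘ e.symm) ∘ e ∘ Sum.inr = j' := by ext; simp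
  rw [hinl, hinr]
  exact if_congr (hpad.eq_iff.trans eq_comm) rfl rfl

theorem ae_pow_card_le_cpRank_tuckerTensor {α β : Type*} [Fintype α] [Fintype β] [DecidableEq β]
    (e : α ⊕ β ≃ Fin N) (hβα : Fintype.card β ≤ Fintype.card α) (hJ : 0 < J) (hJM : J ≤ M) :
    ∀ᵐ x : ((Fin N → Fin J) → ℝ) × (Fin N → Fin M → Fin J → ℝ),
      J ^ Fintype.card β ≤ cpRank (tuckerTensor x.1 x.2) := by
  obtain ⟨f⟩ := Function.Embedding.nonempty_of_card_le hβα
  let pad : (β → Fin J) → α → Fin J := fun j => Function.extend f j fun _ => ⟨0, hJ⟩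
  have hpad : pad.Injective := fun j j' h => funext fun b => by
    simpa [pad, f.injective.extend_apply] using congrFun h (f b)
  have hdet : ((flattening e (tuckerTensor (diagonalCore e pad) (inclusionFactor hJM))).submatrix
      (fun j => Fin.castLE hJM ∘ pad j) (fun j => Fin.castLE hJM ∘ j)).det ≠ 0 := by
    rw [submatrix_flattening_diagonalCore e hpad hJM, Matrix.det_one]
    exact one_ne_zero
  have := ae_card_le_cpRank_tuckerTensor e (fun j => Fin.castLE hJM ∘ pad j)
    (fun j => Fin.castLE hJM ∘ j) (diagonalCore e pad, inclusionFactor hJM) hdet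
  rwa [Fintype.card_fun, Fintype.card_fin] at this

end Tucker

theorem tucker_cpRank_lower_bound_ae_equal_ranks_general
    (N M J : ℕ) (hJ : 1 ≤ J) (hJM : J ≤ M) :
    (Even N →
      volume {x : ((Fin N → Fin J) → ℝ) × (Fin N → Fin M → Fin J → ℝ) |
        cpRank (tuckerTensor x.1 x.2) < J ^ (N / 2)} = 0) ∧
    (Odd N →
      volume {x : ((Fin N → Fin J) → ℝ) × (Fin N → Fin M → Fin J → ℝ) |
        cpRank (tuckerTensor x.1 x.2) < J ^ ((N - 1) / 2)} = 0) := by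
  have hae := ae_pow_card_le_cpRank_tuckerTensor
    (finSumFinEquiv.trans (finCongr (Nat.sub_add_cancel (Nat.div_le_self N 2))))
    (by simp only [Fintype.card_fin]; omega) hJ hJM
  rw [Fintype.card_fin] at hae
  have hnull : volume {x : ((Fin N → Fin J) → ℝ) × (Fin N → Fin M → Fin J → ℝ) |
      cpRank (tuckerTensor x.1 x.2) < J ^ (N / 2)} = 0 :=
    measure_eq_zero_iff_ae_notMem.mpr (hae.mono fun x hx => not_lt.mpr hx)
  refine ⟨fun _ => hnull, fun hodd => ?_⟩
  obtain ⟨m, rfl⟩ := hodd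
  rwa [show (2 * m + 1 - 1) / 2 = (2 * m + 1) / 2 by omega]

/-- For Lebesgue-almost every Tucker parameter configuration (core `G` of size `J` in every
mode and factor matrices `U i ∈ ℝ^{M × J}`), the resulting tensor has CP rank at least
`J^(N/2)` when `N` is even, and at least `J^((N-1)/2)` when `N` is odd. -/
theorem tucker_cpRank_lower_bound_ae_equal_ranks
    (N M J : ℕ) (hN : 2 ≤ N) (hJ : 1 ≤ J) (hJM : J ≤ M) :
    (Even N →
      volume {x : ((Fin N → Fin J) → ℝ) × (Fin N → Fin M → Fin J → ℝ) |
        cpRank (tuckerTensor x.1 x.2) < J ^ (N / 2)} = 0) ∧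
    (Odd N →
      volume {x : ((Fin N → Fin J) → ℝ) × (Fin N → Fin M → Fin J → ℝ) |
        cpRank (tuckerTensor x.1 x.2) < J ^ ((N - 1) / 2)} = 0) :=
  tucker_cpRank_lower_bound_ae_equal_ranks_general N M J hJ hJM
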